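/- For all n ≥ 0, F(2n; 0, n) = (1/(2n+1)) · C(2n+1, n+1), where F counts Gessel walks. -/
import Mathlib


open Finset DyckStep

/-- The four Gessel steps: W, E, NE, SW. -/
def gstep : Fin 4 → ℤ × ℤ
  | 0 => (-1, 0)
  | 1 => (1, 0)
  | 2 => (1, 1)
  | 3 => (-1, -1)

/-- Position of the walk `w` after `j` steps. -/
def wpos (m : ℕ) (w : Fin m → Fin 4) (j : ℕ) : ℤ × ℤ :=
  ∑ i : Fin m, if (i : ℕ) < j then gstep (w i) else 0

/-- `gesselF m n1 n2` : number of Gessel walks of length `m` from the origin to `(n1, n2)`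
staying in the first quadrant. -/
noncomputable def gesselF (m : ℕ) (n1 n2 : ℤ) : ℕ :=
  Nat.card {w : Fin m → Fin 4 //
    (∀ j, 1 ≤ j → j ≤ m → 0 ≤ (wpos m w j).1 ∧ 0 ≤ (wpos m w j).2) ∧
    wpos m w m = (n1, n2)}

/-- Partial sum of a `±1` sequence. -/
def pSum (m : ℕ) (f : Fin m → ℤ) (j : ℕ) : ℤ :=
  ∑ i : Fin m, if (i : ℕ) < j then f i else 0

lemma wpos_zero (m : ℕ) (w : Fin m → Fin 4) : wpos m w 0 = 0 := by simp [wpos]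

lemma wpos_succ (m : ℕ) (w : Fin m → Fin 4) (j : ℕ) (hj : j < m) :
    wpos m w (j + 1) = wpos m w j + gstep (w ⟨j, hj⟩) := by
  unfold wpos
  have key : ∀ i : Fin m, (if (i : ℕ) < j + 1 then gstep (w i) else 0)
      = (if (i : ℕ) < j then gstep (w i) else 0) + (if (i : ℕ) = j then gstep (w i) else 0) := by
    intro i
    rcases lt_trichotomy (i : ℕ) j with h | h | h
    · rw [if_pos (by omega), if_pos h, if_neg (by omega), add_zero]
    · rw [if_pos (by omega), if_neg (by omega), if_pos h, zero_add]
    · rw [if_neg (by omega), if_neg (by omega), if_neg (by omega), add_zero]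
  rw [Finset.sum_congr rfl fun i _ => key i, Finset.sum_add_distrib]
  congr 1
  rw [Finset.sum_eq_single (⟨j, hj⟩ : Fin m)]
  · simp
  · intro b _ hb
    have : (b : ℕ) ≠ j := fun h => hb (Fin.ext h)
    simp [this]
  · simp

lemma wpos_last (m : ℕ) (w : Fin m → Fin 4) :
    wpos m w m = ∑ i : Fin m, gstep (w i) :=
  Finset.sum_congr rfl fun i _ => if_pos i.isLt

lemma steps_mem (n : ℕ) (w : Fin (2 * n) → Fin 4)
    (he : wpos (2 * n) w (2 * n) = (0, (n : ℤ))) (i : Fin (2 * n)) :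
    w i = 0 ∨ w i = 2 := by
  have hsum : ∑ k : Fin (2 * n), gstep (w k) = (0, (n : ℤ)) := by
    rw [← wpos_last]; exact he
  have h1 : ∑ k : Fin (2 * n), (gstep (w k)).1 = 0 := by
    rw [← Prod.fst_sum, hsum]
  have h2 : ∑ k : Fin (2 * n), (gstep (w k)).2 = n := by
    rw [← Prod.snd_sum, hsum]
  have key : ∑ k : Fin (2 * n), (2 * (gstep (w k)).2 - (gstep (w k)).1)
      = ∑ k : Fin (2 * n), (1 : ℤ) := by
    rw [Finset.sum_sub_distrib, ← Finset.mul_sum, h2, h1, Finset.sum_const]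
    simp
  have hle : ∀ k ∈ Finset.univ, 2 * (gstep (w (k : Fin (2*n)))).2 - (gstep (w k)).1 ≤ (1:ℤ) := by
    intro k _
    have : ∀ s : Fin 4, 2 * (gstep s).2 - (gstep s).1 ≤ 1 := by decide
    exact this _
  have hall := (Finset.sum_eq_sum_iff_of_le hle).mp key i (Finset.mem_univ i)
  have : ∀ s : Fin 4, 2 * (gstep s).2 - (gstep s).1 = 1 → s = 0 ∨ s = 2 := by decide
  exact this _ hall

def listOfW (m : ℕ) (w : Fin m → Fin 4) : List DyckStep :=
  List.ofFn fun i : Fin m => if w i = 0 then D else U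

def wOfList (m : ℕ) (l : List DyckStep) (i : Fin m) : Fin 4 :=
  if l.getD i D = U then 2 else 0

lemma length_listOfW (m : ℕ) (w : Fin m → Fin 4) : (listOfW m w).length = m := by
  simp [listOfW]

lemma wpos_eq_count (m : ℕ) (w : Fin m → Fin 4) (hw : ∀ i, w i = 0 ∨ w i = 2) :
    ∀ j, j ≤ m →
    (wpos m w j).1 = ((listOfW m w).take j).count U - ((listOfW m w).take j).count D ∧
    (wpos m w j).2 = ((listOfW m w).take j).count U := by
  intro j
  induction j with
  | zero => intro _; simp [wpos]
  | succ j ih =>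
    intro hj
    have hj' : j < m := hj
    obtain ⟨ih1, ih2⟩ := ih hj'.le
    have htake : (listOfW m w).take (j + 1)
        = (listOfW m w).take j ++ [if w ⟨j, hj'⟩ = 0 then D else U] := by
      rw [List.take_succ]
      congr 1
      rw [List.getElem?_eq_getElem (by rw [length_listOfW]; exact hj')]
      simp [listOfW]
    rw [wpos_succ m w j hj', htake]
    rcases hw ⟨j, hj'⟩ with h | h <;>
      simp [h, gstep, Prod.fst_add, Prod.snd_add, ih1, ih2, List.count_append] <;> ring

lemma wOfList_listOfW (m : ℕ) (w : Fin m → Fin 4) (hw : ∀ i, w i = 0 ∨ w i = 2) :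
    wOfList m (listOfW m w) = w := by
  funext i
  unfold wOfList
  rw [List.getD_eq_getElem _ _ (by rw [length_listOfW]; exact i.isLt)]
  simp only [listOfW, List.getElem_ofFn]
  rcases hw i with h | h <;> simp [h]

lemma listOfW_wOfList (m : ℕ) (l : List DyckStep) (hl : l.length = m) :
    listOfW m (wOfList m l) = l := by
  apply List.ext_getElem (by rw [length_listOfW, hl])
  intro i h1 h2
  have hg : l.getD i D = l[i] := List.getD_eq_getElem _ _ (by omega)
  simp only [listOfW, List.getElem_ofFn, wOfList, hg]
  cases h : l[i] <;> simp [h]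

lemma wOfList_mem (m : ℕ) (l : List DyckStep) (i : Fin m) :
    wOfList m l i = 0 ∨ wOfList m l i = 2 := by
  unfold wOfList; split <;> simp

noncomputable def walkEquiv (n : ℕ) :
    {w : Fin (2 * n) → Fin 4 //
      (∀ j, 1 ≤ j → j ≤ 2 * n → 0 ≤ (wpos (2 * n) w j).1 ∧ 0 ≤ (wpos (2 * n) w j).2) ∧
      wpos (2 * n) w (2 * n) = ((0 : ℤ), (n : ℤ))} ≃ {p : DyckWord // p.semilength = n} where
  toFun := fun ⟨w, hv, he⟩ => by
    have hw : ∀ i, w i = 0 ∨ w i = 2 := steps_mem n w he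
    have hc := wpos_eq_count (2 * n) w hw
    have hfull := hc (2 * n) le_rfl
    rw [List.take_of_length_le (le_of_eq (length_listOfW _ _)), he] at hfull
    have hU : (listOfW (2 * n) w).count U = n := by
      have h2 : (n : ℤ) = ((listOfW (2 * n) w).count U : ℤ) := hfull.2
      exact_mod_cast h2.symm
    have hUD : (listOfW (2 * n) w).count U = (listOfW (2 * n) w).count D := by
      have h1 : (0 : ℤ) = ((listOfW (2 * n) w).count U : ℤ)
          - ((listOfW (2 * n) w).count D : ℤ) := hfull.1
      omega
    exact ⟨⟨listOfW (2 * n) w, hUD, by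
      intro i
      rcases le_or_gt i (2 * n) with hi | hi
      · rcases Nat.eq_zero_or_pos i with h0 | h0
        · simp [h0]
        · have h := (hc i hi).1
          have hnn := (hv i h0 hi).1
          rw [h] at hnn
          exact_mod_cast sub_nonneg.mp hnn
      · rw [List.take_of_length_le (by rw [length_listOfW]; omega)]
        omega⟩, hU⟩
  invFun := fun ⟨p, hp⟩ => by
    have hlen : p.toList.length = 2 * n := by
      rw [← p.two_mul_semilength_eq_length, hp]
    refine ⟨wOfList (2 * n) p.toList, ?_, ?_⟩
    · intro j _ hj
      have hc := (wpos_eq_count (2 * n) _ (wOfList_mem (2 * n) p.toList) j hj)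
      rw [listOfW_wOfList (2 * n) p.toList hlen] at hc
      rw [hc.1, hc.2]
      constructor
      · have := p.count_D_le_count_U j
        simp only [sub_nonneg]
        exact_mod_cast this
      · positivity
    · have hc := (wpos_eq_count (2 * n) _ (wOfList_mem (2 * n) p.toList) (2 * n) le_rfl)
      rw [listOfW_wOfList (2 * n) p.toList hlen, List.take_of_length_le (le_of_eq hlen)] at hc
      have h1 : (wpos (2 * n) (wOfList (2 * n) p.toList) (2 * n)).1 = 0 := by
        rw [hc.1, p.count_U_eq_count_D, sub_self]
      have h2 : (wpos (2 * n) (wOfList (2 * n) p.toList) (2 * n)).2 = (n : ℤ) := by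
        have hn : (p.semilength : ℤ) = (n : ℤ) := by exact_mod_cast hp
        rw [hc.2]; exact hn
      exact Prod.ext h1 h2
  left_inv := fun ⟨w, hv, he⟩ => by
    apply Subtype.ext
    exact wOfList_listOfW (2 * n) w (steps_mem n w he)
  right_inv := fun ⟨p, hp⟩ => by
    apply Subtype.ext
    apply DyckWord.ext
    exact listOfW_wOfList (2 * n) p.toList
      (by rw [← p.two_mul_semilength_eq_length, hp])


lemma gesselF_eq_catalan (n : ℕ) : gesselF (2 * n) 0 (n : ℤ) = catalan n := by
  unfold gesselF
  rw [Nat.card_congr (walkEquiv n), Nat.card_eq_fintype_card,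
    DyckWord.card_dyckWord_semilength_eq_catalan]

theorem gessel_C2_k0 (n : ℕ) :
    (2 * n + 1) * gesselF (2 * n) 0 (n : ℤ) = (2 * n + 1).choose (n + 1) := by
  rw [gesselF_eq_catalan]
  have h1 := Nat.add_one_mul_choose_eq (2 * n) n
  have h2 : (n + 1) * catalan n = (2 * n).choose n := succ_mul_catalan_eq_centralBinom n
  apply Nat.eq_of_mul_eq_mul_right (Nat.succ_pos n)
  calc (2 * n + 1) * catalan n * (n + 1)
      = (2 * n + 1) * ((n + 1) * catalan n) := by ring
    _ = (2 * n + 1) * (2 * n).choose n := by rw [h2]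
    _ = (2 * n + 1).choose (n + 1) * (n + 1) := h1
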